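/- arXiv:1705.05869 — 5 statements merged into one kernel-verified Lean document; each statement's English description precedes it below -/
import Mathlib

section
/- Let θ : Ω → Ω, let T_ω : M → M be measurable maps with iterates T_ω^n = T_{θ^{n−1}ω} ∘ ⋯ ∘ T_ω, and let μ^ω be probability measures on M satisfying the equivariance T_ω^*μ^ω = μ^{θω}. For a measurable set B ⊂ M define τ^ω_B(x) = inf{j ≥ 1 : T_ω^j x ∈ B} and ε_ω(B) = sup_{k ≥ 1} |μ^ω(τ^ω_B > k)·μ^ω(B) − μ^ω(B ∩ {τ^ω_B > k})|. Then for every N ≥ 1: |μ^ω(τ^ω_B > N) − ∏_{j=1}^N (1 − μ^{θ^jω}(B))| ≤ Σ_{j=1}^N ε_{θ^jω}(B) ∏_{k=1}^{j−1} (1 − μ^{θ^kω}(B)). -/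
open MeasureTheory Filter Metric Set

noncomputable section

/-- Iterates of the random maps: `iterT θ T n ω = T_{θ^{n-1}ω} ∘ ⋯ ∘ T_{θω} ∘ T_ω`. -/
def iterT {Ω M : Type*} (θ : Ω → Ω) (T : Ω → M → M) : ℕ → Ω → M → M
  | 0 => fun _ => id
  | n + 1 => fun ω => iterT θ T n (θ ω) ∘ T ω

/-- The event `{τ^ω_B > k}`: no entry to `B` at the times `1, …, k`. -/
def tauGT {Ω M : Type*} (θ : Ω → Ω) (T : Ω → M → M) (ω : Ω) (B : Set M) (k : ℕ) :
    Set M :=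
  {x | ∀ j : ℕ, 1 ≤ j → j ≤ k → iterT θ T j ω x ∉ B}

/-- The mixing-error quantity
`ε_ω(B) = sup_{k ≥ 1} |μ^ω(τ^ω_B > k)·μ^ω(B) − μ^ω(B ∩ {τ^ω_B > k})|`. -/
def epsErr {Ω M : Type*} [MeasurableSpace M] (θ : Ω → Ω) (T : Ω → M → M)
    (μω : Ω → Measure M) (ω : Ω) (B : Set M) : ℝ :=
  ⨆ k : ℕ, |(μω ω (tauGT θ T ω B (k + 1))).toReal * (μω ω B).toReal
    - (μω ω (B ∩ tauGT θ T ω B (k + 1))).toReal|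

/-!
Conditioning the orbit on its first step, equivariance gives the one-step recursion
`μ^ω(τ > k + 1) = μ^{θω}(τ > k) (1 - μ^{θω}(B)) + d`, where the defect
`d = μ^{θω}(τ > k) μ^{θω}(B) - μ^{θω}(B ∩ {τ > k})` is bounded by `ε_{θω}(B)`.
Unrolling this recursion along the orbit of `θ` is a perturbed-product estimate: since the
factors `1 - μ(B)` are nonnegative, the error made at step `j` is propagated with the weight
`∏_{k<j} (1 - μ^{θ^kω}(B))`.
-/

namespace Finset

@[to_additive sum_Icc_one_eq_sum_range_succ]
theorem prod_Icc_one_eq_prod_range_succ {M : Type*} [CommMonoid M] (f : ℕ → M) (n : ℕ) :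
    ∏ j ∈ Icc 1 n, f j = ∏ i ∈ range n, f (i + 1) := by
  rw [range_eq_Ico, prod_Ico_add', zero_add, Ico_add_one_right_eq_Icc]

end Finset

theorem abs_sub_prod_iterate_le {Ω : Type*} (θ : Ω → Ω) (a : ℕ → Ω → ℝ) (c e : Ω → ℝ)
    (hc : ∀ ω, 0 ≤ c ω) (ha₀ : ∀ ω, a 0 ω = 1)
    (ha : ∀ n ω, |a (n + 1) ω - a n (θ ω) * c ω| ≤ e ω) (N : ℕ) (ω : Ω) :
    |a N ω - ∏ i ∈ Finset.range N, c (θ^[i] ω)|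
      ≤ ∑ i ∈ Finset.range N, e (θ^[i] ω) * ∏ k ∈ Finset.range i, c (θ^[k] ω) := by
  induction N generalizing ω with
  | zero => simp [ha₀]
  | succ N ih =>
    set P := ∏ i ∈ Finset.range N, c (θ^[i] (θ ω))
    set S := ∑ i ∈ Finset.range N, e (θ^[i] (θ ω)) * ∏ k ∈ Finset.range i, c (θ^[k] (θ ω))
      with hS_def
    have hP : ∏ i ∈ Finset.range (N + 1), c (θ^[i] ω) = P * c ω :=
      Finset.prod_range_succ' _ _
    have hS : ∑ i ∈ Finset.range (N + 1), e (θ^[i] ω) * ∏ k ∈ Finset.range i, c (θ^[k] ω)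
        = c ω * S + e ω := by
      simp only [Finset.sum_range_succ', Finset.prod_range_succ', Function.iterate_succ_apply,
        Finset.prod_range_zero, Function.iterate_zero_apply, mul_one, hS_def, Finset.mul_sum]
      congr 1
      exact Finset.sum_congr rfl fun _ _ => by ring
    calc |a (N + 1) ω - ∏ i ∈ Finset.range (N + 1), c (θ^[i] ω)|
        = |(a (N + 1) ω - a N (θ ω) * c ω) + c ω * (a N (θ ω) - P)| := by rw [hP]; congr 1; ring
      _ ≤ |a (N + 1) ω - a N (θ ω) * c ω| + c ω * |a N (θ ω) - P| :=
          (abs_add_le _ _).trans_eq (by rw [abs_mul, abs_of_nonneg (hc ω)])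
      _ ≤ e ω + c ω * S := add_le_add (ha N ω) (mul_le_mul_of_nonneg_left (ih (θ ω)) (hc ω))
      _ = _ := by rw [hS, add_comm]

section HittingTimes

variable {Ω M : Type*} {θ : Ω → Ω} {T : Ω → M → M}

@[simp]
theorem tauGT_zero (ω : Ω) (B : Set M) : tauGT θ T ω B 0 = univ :=
  eq_univ_of_forall fun _ _ _ _ => by omega

theorem tauGT_succ (ω : Ω) (B : Set M) (k : ℕ) :
    tauGT θ T ω B (k + 1) = T ω ⁻¹' (tauGT θ T (θ ω) B k \ B) := by
  ext x
  simp only [tauGT, mem_ofPred_eq, mem_preimage, Set.mem_sdiff]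
  constructor
  · intro h
    exact ⟨fun j hj hjk => h (j + 1) (by omega) (by omega), h 1 le_rfl (by omega)⟩
  · rintro ⟨hlater, hfirst⟩ (_ | _ | j) hj hjk
    · omega
    · exact hfirst
    · exact hlater (j + 1) (by omega) (by omega)

variable [MeasurableSpace M]

theorem measurableSet_tauGT (hT : ∀ ω, Measurable (T ω)) {B : Set M} (hB : MeasurableSet B)
    (k : ℕ) (ω : Ω) : MeasurableSet (tauGT θ T ω B k) := by
  induction k generalizing ω with
  | zero => simp
  | succ k ih => rw [tauGT_succ]; exact hT ω ((ih (θ ω)).diff hB)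

variable (θ T) in
def hittingDefect (μω : Ω → Measure M) (ω : Ω) (B : Set M) (k : ℕ) : ℝ :=
  (μω ω (tauGT θ T ω B k)).toReal * (μω ω B).toReal - (μω ω (B ∩ tauGT θ T ω B k)).toReal

variable {μω : Ω → Measure M} [∀ ω, IsProbabilityMeasure (μω ω)]

theorem abs_hittingDefect_le_one (ω : Ω) (B : Set M) (k : ℕ) :
    |hittingDefect θ T μω ω B k| ≤ 1 := by
  simp only [hittingDefect, ← measureReal_def]
  exact abs_sub_le_of_nonneg_of_le (mul_nonneg measureReal_nonneg measureReal_nonneg)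
    (mul_le_one₀ measureReal_le_one measureReal_nonneg measureReal_le_one)
    measureReal_nonneg measureReal_le_one

theorem abs_hittingDefect_le_epsErr (ω : Ω) (B : Set M) (k : ℕ) :
    |hittingDefect θ T μω ω B k| ≤ epsErr θ T μω ω B := by
  have hbdd : BddAbove (range fun k => |hittingDefect θ T μω ω B (k + 1)|) :=
    ⟨1, forall_mem_range.2 fun k => abs_hittingDefect_le_one ω B (k + 1)⟩
  cases k with
  | zero =>
    have : hittingDefect θ T μω ω B 0 = 0 := by simp [hittingDefect]
    rw [this, abs_zero]
    exact (abs_nonneg _).trans (le_ciSup hbdd 0)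
  | succ k => exact le_ciSup hbdd k

theorem toReal_measure_tauGT_succ (hT : ∀ ω, Measurable (T ω))
    (hequiv : ∀ ω, Measure.map (T ω) (μω ω) = μω (θ ω)) (ω : Ω) {B : Set M}
    (hB : MeasurableSet B) (k : ℕ) :
    (μω ω (tauGT θ T ω B (k + 1))).toReal
      = (μω (θ ω) (tauGT θ T (θ ω) B k)).toReal * (1 - (μω (θ ω) B).toReal)
        + hittingDefect θ T μω (θ ω) B k := by
  have hτ := measurableSet_tauGT (θ := θ) hT hB k (θ ω)
  rw [tauGT_succ, ← Measure.map_apply (hT ω) (hτ.diff hB), hequiv ω, hittingDefect]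
  simp only [← measureReal_def]
  rw [← inter_comm, ← measureReal_sdiff_add_inter (s := tauGT θ T (θ ω) B k) hB]
  ring

end HittingTimes

/-- **Abstract comparison of the quenched hitting-time distribution with the product
`∏_{j=1}^N (1 − μ^{θ^jω}(B))`**, with error controlled by the quantities
`ε_{θ^jω}(B)`. -/
theorem hitting_time_product_comparison_abstract
    {Ω : Type*} {M : Type*} [MeasurableSpace M]
    (θ : Ω → Ω) (T : Ω → M → M) (hTmeas : ∀ ω, Measurable (T ω))
    (μω : Ω → Measure M) (hprob : ∀ ω, IsProbabilityMeasure (μω ω))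
    (hequiv : ∀ ω, Measure.map (T ω) (μω ω) = μω (θ ω))
    (ω : Ω) (B : Set M) (hB : MeasurableSet B) :
    ∀ N : ℕ, 1 ≤ N →
      |(μω ω (tauGT θ T ω B N)).toReal
          - ∏ j ∈ Finset.Icc 1 N, (1 - (μω (θ^[j] ω) B).toReal)|
        ≤ ∑ j ∈ Finset.Icc 1 N, epsErr θ T μω (θ^[j] ω) B *
            ∏ k ∈ Finset.Icc 1 (j - 1), (1 - (μω (θ^[k] ω) B).toReal) := by
  intro N _
  have key := abs_sub_prod_iterate_le θ (fun n ω => (μω ω (tauGT θ T ω B n)).toReal)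
    (fun ω => 1 - (μω (θ ω) B).toReal) (fun ω => epsErr θ T μω (θ ω) B)
    (fun ω => sub_nonneg.2 measureReal_le_one) (fun ω => by simp)
    (fun n ω => by
      rw [toReal_measure_tauGT_succ hTmeas hequiv ω hB, add_sub_cancel_left]
      exact abs_hittingDefect_le_epsErr _ _ _) N ω
  simp only [← Function.iterate_succ_apply' θ, Nat.succ_eq_add_one] at key
  simpa only [Finset.prod_Icc_one_eq_prod_range_succ, Finset.sum_Icc_one_eq_sum_range_succ,
    Nat.add_sub_cancel] using key
end
end

section
/- (Randomized doubling lemma.) Let T_ω : M → M be maps on a metric space with iterates T_ω^n = T_{θ^{n−1}ω} ∘ ⋯ ∘ T_ω satisfying d(T_ω^n u, T_ω^n v) ≤ A^n d(u,v) for all u, v and n, where A ≥ 2, and assume each T_ω is surjective. Put s_p = 2^p (A^{k 2^p} − 1)/(A^k − 1). Then for every p, k ∈ ℕ, every ρ > 0 and every ω ∈ Ω, taking ω̃ = (ω₀…ω_{k−1})^{2^p − 1} ω (the word ω₀…ω_{k−1} repeated 2^p − 1 times prepended to ω, so that T_{ω̃}^{k2^p} = (T_ω^k)^{2^p}), one has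 the inclusion {x ∈ M : B_ρ(x) ∩ T_ω^k B_ρ(x) ≠ ∅} ⊂ {x ∈ M : B_{s_p ρ}(x) ∩ T_{ω̃}^{k2^p} B_{s_p ρ}(x) ≠ ∅}. -/
open Metric Set

noncomputable section

/-- The left shift on the one-sided full shift space. -/
def shift {S : Type*} (ω : ℕ → S) : ℕ → S := fun n => ω (n + 1)

/-- The word `ω₀…ω_{k-1}` repeated `2^p − 1` times, prepended to `ω`. -/
def repeatWord {S : Type*} (ω : ℕ → S) (k p : ℕ) : ℕ → S := fun n =>
  if n < (2 ^ p - 1) * k then ω (n % k) else ω (n - (2 ^ p - 1) * k)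

lemma shift_iter_apply {S : Type*} : ∀ (m : ℕ) (ω : ℕ → S) (n : ℕ),
    (shift^[m] ω) n = ω (n + m)
  | 0, ω, n => by simp
  | m + 1, ω, n => by
    rw [Function.iterate_succ_apply, shift_iter_apply m]
    show ω (n + m + 1) = ω (n + (m + 1))
    congr 1

lemma iterT_congr {S M : Type*} (T : (ℕ → S) → M → M)
    (hdep : ∀ ω ω' : ℕ → S, ω 0 = ω' 0 → T ω = T ω') :
    ∀ (n : ℕ) (ω ω' : ℕ → S), (∀ j < n, ω j = ω' j) →
      iterT shift T n ω = iterT shift T n ω'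
  | 0, ω, ω', _ => rfl
  | n + 1, ω, ω', h => by
    show iterT shift T n (shift ω) ∘ T ω = iterT shift T n (shift ω') ∘ T ω'
    rw [hdep ω ω' (h 0 (by omega)),
      iterT_congr T hdep n (shift ω) (shift ω') (fun j hj => h (j + 1) (by omega))]

lemma iterT_add {S M : Type*} (T : (ℕ → S) → M → M) :
    ∀ (m n : ℕ) (ω : ℕ → S),
      iterT shift T (m + n) ω = iterT shift T n (shift^[m] ω) ∘ iterT shift T m ω
  | 0, n, ω => by simp [iterT]
  | m + 1, n, ω => by
    have h : m + 1 + n = (m + n) + 1 := by omega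
    rw [h]
    show iterT shift T (m + n) (shift ω) ∘ T ω = _
    rw [iterT_add T m n (shift ω), Function.iterate_succ_apply]
    rfl

/-- **Randomized doubling lemma (Lemma B.3, random version).**
If the iterates satisfy `d(T_ω^n u, T_ω^n v) ≤ A^n d(u,v)` with `A ≥ 2`, the fibre maps
are surjective and depend only on the zeroth symbol, then with
`s_p = 2^p (A^{k2^p} − 1)/(A^k − 1)` and `ω̃ = (ω₀…ω_{k-1})^{2^p-1} ω`,
`{x : B_ρ(x) ∩ T_ω^k B_ρ(x) ≠ ∅} ⊆ {x : B_{s_pρ}(x) ∩ T_{ω̃}^{k2^p} B_{s_pρ}(x) ≠ ∅}`. -/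
theorem randomized_doubling_lemma
    {S : Type*} {M : Type*} [MetricSpace M]
    (T : (ℕ → S) → M → M)
    (hdep : ∀ ω ω' : ℕ → S, ω 0 = ω' 0 → T ω = T ω')
    (hsurj : ∀ ω : ℕ → S, Function.Surjective (T ω))
    (A : ℝ) (hA : 2 ≤ A)
    (hlip : ∀ (ω : ℕ → S) (n : ℕ) (u v : M),
      dist (iterT shift T n ω u) (iterT shift T n ω v) ≤ A ^ n * dist u v)
    (p k : ℕ) (hk : 1 ≤ k) (ρ : ℝ) (hρ : 0 < ρ) (ω : ℕ → S) :
    {x : M | (ball x ρ ∩ iterT shift T k ω '' ball x ρ).Nonempty} ⊆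
      {x : M | (ball x ((2 ^ p * (A ^ (k * 2 ^ p) - 1) / (A ^ k - 1)) * ρ) ∩
        iterT shift T (k * 2 ^ p) (repeatWord ω k p) ''
          ball x ((2 ^ p * (A ^ (k * 2 ^ p) - 1) / (A ^ k - 1)) * ρ)).Nonempty} := by
  set F := iterT shift T k ω with hF
  set L := A ^ k with hLdef
  -- basic facts about L
  have hL : (2 : ℝ) ≤ L := le_trans hA (le_self_pow₀ (by linarith) (by omega))
  have hL1 : (1 : ℝ) < L := by linarith
  have hLne : L - 1 ≠ 0 := by intro h; linarith [sub_eq_zero.mp h]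
  have hLm : ∀ m : ℕ, (1 : ℝ) ≤ L ^ m := fun m => one_le_pow₀ (by linarith)
  -- the scaling sequence
  set s : ℕ → ℝ := fun j => 2 ^ j * (L ^ (2 ^ j) - 1) / (L - 1) with hs
  have hs0 : s 0 = 1 := by
    simp only [hs, pow_zero, pow_one, one_mul]
    field_simp
  have hsrec : ∀ j, s (j + 1) = 2 * (L ^ (2 ^ j) + 1) * s j := by
    intro j
    simp only [hs]
    have e1 : (2 : ℕ) ^ (j + 1) = 2 ^ j + 2 ^ j := by ring
    rw [e1, pow_add, pow_succ]
    field_simp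
    ring
  have hs1 : ∀ j, 1 ≤ s j := by
    intro j
    induction j with
    | zero => rw [hs0]
    | succ j ih =>
      rw [hsrec j]
      nlinarith [hLm (2 ^ j)]
  -- structural fact: iterT over repeatWord is iterate of F
  have hrep : ∀ i ≤ 2 ^ p, iterT shift T (i * k) (repeatWord ω k p) = F^[i] := by
    intro i hi
    induction i with
    | zero => simp [iterT]
    | succ i ih =>
      have hi' : i ≤ 2 ^ p := by omega
      rw [show (i + 1) * k = i * k + k by ring, iterT_add, ih hi']
      have hblock : iterT shift T k (shift^[i * k] (repeatWord ω k p)) =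
          iterT shift T k ω := by
        apply iterT_congr T hdep
        intro j hj
        rw [shift_iter_apply]
        unfold repeatWord
        by_cases hlt : j + i * k < (2 ^ p - 1) * k
        · rw [if_pos hlt, Nat.add_mul_mod_self_right, Nat.mod_eq_of_lt hj]
        · rw [if_neg hlt]
          -- in this case i = 2^p - 1
          have hile : i ≤ 2 ^ p - 1 := by
            by_contra hcon
            have : i = 2 ^ p := by omega
            subst this
            have : (2 ^ p - 1) * k ≤ 2 ^ p * k := Nat.mul_le_mul_right _ (by omega)
            omega
          have hieq : i = 2 ^ p - 1 := by
            by_contra hcon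
            have h2 : i + 1 ≤ 2 ^ p - 1 := by omega
            have : (i + 1) * k ≤ (2 ^ p - 1) * k := Nat.mul_le_mul_right _ h2
            have : j + i * k < (2 ^ p - 1) * k := by
              calc j + i * k < (i + 1) * k := by rw [add_mul, one_mul]; omega
              _ ≤ (2 ^ p - 1) * k := this
            exact hlt this
          subst hieq
          congr 1
          omega
      rw [hblock, ← hF, ← Function.iterate_succ']
  -- Lipschitz bound for iterates of F
  have hLpos : ∀ m : ℕ, (0 : ℝ) ≤ L ^ m := fun m => by positivity
  have hFlip : ∀ (m : ℕ) (u v : M), dist (F^[m] u) (F^[m] v) ≤ L ^ m * dist u v := by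
    intro m
    induction m with
    | zero => intro u v; simp
    | succ m ih =>
      intro u v
      rw [Function.iterate_succ_apply, Function.iterate_succ_apply]
      calc dist (F^[m] (F u)) (F^[m] (F v)) ≤ L ^ m * dist (F u) (F v) := ih _ _
        _ ≤ L ^ m * (L * dist u v) := by
            apply mul_le_mul_of_nonneg_left _ (hLpos m)
            exact hlip ω k u v
        _ = L ^ (m + 1) * dist u v := by ring
  -- main argument
  intro x hx
  obtain ⟨y, hyb, z, hzb, hzy⟩ := hx
  rw [mem_ball] at hyb hzb
  have hzx : dist x z < ρ := by rw [dist_comm]; exact hzb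
  have hyx : dist x (F z) < ρ := by rw [hzy, dist_comm]; exact hyb
  have claim : ∀ j, dist x (F^[2 ^ j] z) < s j * ρ := by
    intro j
    induction j with
    | zero => simpa [hs0] using hyx
    | succ j ih =>
      have e1 : (2 : ℕ) ^ (j + 1) = 2 ^ j + 2 ^ j := by ring
      rw [e1, Function.iterate_add_apply]
      have h1 : dist x (F^[2 ^ j] (F^[2 ^ j] z)) ≤
          dist x (F^[2 ^ j] z) + dist (F^[2 ^ j] z) (F^[2 ^ j] (F^[2 ^ j] z)) :=
        dist_triangle _ _ _
      have h2 : dist (F^[2 ^ j] z) (F^[2 ^ j] (F^[2 ^ j] z)) ≤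
          L ^ (2 ^ j) * dist z (F^[2 ^ j] z) := hFlip _ _ _
      have h3 : dist z (F^[2 ^ j] z) ≤ dist z x + dist x (F^[2 ^ j] z) :=
        dist_triangle _ _ _
      have h4 : dist z x < ρ := by rw [dist_comm]; exact hzx
      have hL0 : (0 : ℝ) < L ^ (2 ^ j) := by positivity
      have ha : L ^ (2 ^ j) * dist z x < L ^ (2 ^ j) * ρ :=
        mul_lt_mul_of_pos_left h4 hL0
      have hb : L ^ (2 ^ j) * dist x (F^[2 ^ j] z) < L ^ (2 ^ j) * (s j * ρ) :=
        mul_lt_mul_of_pos_left ih hL0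
      have hc : L ^ (2 ^ j) * dist z (F^[2 ^ j] z) ≤
          L ^ (2 ^ j) * dist z x + L ^ (2 ^ j) * dist x (F^[2 ^ j] z) := by
        have := mul_le_mul_of_nonneg_left h3 (hLpos (2 ^ j))
        rw [mul_add] at this
        exact this
      rw [hsrec j]
      calc dist x (F^[2 ^ j] (F^[2 ^ j] z))
          ≤ dist x (F^[2 ^ j] z) +
            (L ^ (2 ^ j) * dist z x + L ^ (2 ^ j) * dist x (F^[2 ^ j] z)) := by
            linarith
        _ < s j * ρ + (L ^ (2 ^ j) * ρ + L ^ (2 ^ j) * (s j * ρ)) := by linarith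
        _ ≤ 2 * (L ^ 2 ^ j + 1) * s j * ρ := by
            nlinarith [mul_nonneg (mul_nonneg (hLpos (2 ^ j)) hρ.le)
              (sub_nonneg.mpr (hs1 j)), mul_nonneg (sub_nonneg.mpr (hs1 j)) hρ.le]
  -- conclude
  have hrad : (2 ^ p * (A ^ (k * 2 ^ p) - 1) / (A ^ k - 1)) = s p := by
    simp only [hs, hLdef, pow_mul]
  refine ⟨F^[2 ^ p] z, ?_, z, ?_, ?_⟩
  · rw [mem_ball, hrad, dist_comm]
    exact claim p
  · rw [mem_ball, hrad, dist_comm]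
    calc dist x z < ρ := hzx
      _ ≤ s p * ρ := le_mul_of_one_le_left hρ.le (hs1 p)
  · rw [mul_comm k, hrep (2 ^ p) le_rfl]
end
end

section
/- Let T_α be the Pomeau–Manneville map with parameter α ∈ (0,1), whose left branch is T_α(x) = x + 2^{1+α}x^{1+α} on [0,1/2). Define a′₀ = 1/2 and, for k ≥ 1, let a′_k ∈ (0,1/2) be the unique left-branch preimage, T_α(a′_k) = a′_{k−1}. Then there exist constants c₁, c₂ > 0 (depending on α) such that c₁ k^{−1/α} ≤ a′_k ≤ c₂ k^{−1/α} for all k ≥ 1; in particular a′_k = O(k^{−1/α}). -/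
open Set

noncomputable section

/-- The Pomeau–Manneville map with parameter `α`:
`T_α(x) = x + 2^{1+α} x^{1+α}` on `[0,1/2)` and `T_α(x) = 2x − 1` on `[1/2,1]`. -/
def pmMap (α : ℝ) (x : ℝ) : ℝ :=
  if x < 1 / 2 then x + 2 ^ (1 + α) * x ^ (1 + α) else 2 * x - 1

/-!
In the coordinate `u ↦ u^{-α}` the left branch is close to a translation: writing
`T_α(u) = u (1 + x)` with `x = 2^{1+α} u^α ∈ (0, 2]`, Bernoulli's inequality gives
`u^{-α} - α 2^{1+α} ≤ T_α(u)^{-α} ≤ u^{-α} - α 2^{1+α} / 3`.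
Hence `b_k = (a′_k)^{-α}` grows linearly in `k`, and `a′_k = b_k^{-1/α} ≍ k^{-1/α}`.
-/

open Real

section Bernoulli

variable {x α : ℝ}

lemma one_sub_mul_le_one_add_rpow_neg (hx : 0 ≤ x) (hα0 : 0 ≤ α) (hα1 : α ≤ 1) :
    1 - α * x ≤ (1 + x) ^ (-α) := by
  have hpos : 0 < 1 + x := by linarith
  have hBern : (1 + x) ^ α ≤ 1 + α * x :=
    rpow_one_add_le_one_add_mul_self (by linarith) hα0 hα1
  calc 1 - α * x ≤ 1 / (1 + α * x) := by
        rw [le_div_iff₀ (by positivity)]; nlinarith [sq_nonneg (α * x)]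
    _ ≤ 1 / (1 + x) ^ α := one_div_le_one_div_of_le (rpow_pos_of_pos hpos _) hBern
    _ = (1 + x) ^ (-α) := by rw [rpow_neg hpos.le, one_div]

lemma one_add_rpow_neg_le_one_sub_mul_div (hx : 0 ≤ x) (hα0 : 0 ≤ α) (hα1 : α ≤ 1) :
    (1 + x) ^ (-α) ≤ 1 - α * (x / (1 + x)) := by
  have hpos : 0 < 1 + x := by linarith
  have hinv : (1 + x)⁻¹ = 1 + -(x / (1 + x)) := by field_simp; ring
  have hfrac : x / (1 + x) ≤ 1 := (div_le_one hpos).2 (by linarith)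
  calc (1 + x) ^ (-α) = (1 + -(x / (1 + x))) ^ α := by
        rw [rpow_neg hpos.le, ← inv_rpow hpos.le, hinv]
    _ ≤ 1 + α * -(x / (1 + x)) := rpow_one_add_le_one_add_mul_self (by linarith) hα0 hα1
    _ = 1 - α * (x / (1 + x)) := by ring

end Bernoulli

lemma pmMap_of_mem_Ioo {α u : ℝ} (hu : u ∈ Ioo (0 : ℝ) (1 / 2)) :
    pmMap α u = u * (1 + 2 ^ (1 + α) * u ^ α) := by
  rw [pmMap, if_pos hu.2, rpow_add hu.1, rpow_one]
  ring

lemma pmMap_rpow_neg_bounds {α u : ℝ} (hα0 : 0 ≤ α) (hα1 : α ≤ 1) (hu : u ∈ Ioo (0 : ℝ) (1 / 2)) :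
    u ^ (-α) - α * 2 ^ (1 + α) ≤ pmMap α u ^ (-α) ∧
      pmMap α u ^ (-α) ≤ u ^ (-α) - α * 2 ^ (1 + α) / 3 := by
  obtain ⟨hu0, hu1⟩ := hu
  set x := 2 ^ (1 + α) * u ^ α with hx_def
  have hx0 : 0 ≤ x := by positivity
  have hx2 : x ≤ 2 := by
    have h2u : (2 * u) ^ α ≤ 1 := rpow_le_one (by positivity) (by linarith) hα0
    calc x = 2 * (2 * u) ^ α := by
          rw [hx_def, mul_rpow zero_le_two hu0.le, rpow_add zero_lt_two, rpow_one, mul_assoc]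
      _ ≤ 2 := by linarith
  have hux : u ^ (-α) * x = 2 ^ (1 + α) := by
    rw [hx_def, mul_left_comm, ← rpow_add hu0, neg_add_cancel, rpow_zero, mul_one]
  have hmap : pmMap α u ^ (-α) = u ^ (-α) * (1 + x) ^ (-α) := by
    rw [pmMap_of_mem_Ioo ⟨hu0, hu1⟩, mul_rpow hu0.le (by positivity)]
  have hupos : 0 < u ^ (-α) := rpow_pos_of_pos hu0 _
  have hthird : x / 3 ≤ x / (1 + x) := div_le_div_of_nonneg_left hx0 (by linarith) (by linarith)
  rw [hmap]
  constructor
  · calc u ^ (-α) - α * 2 ^ (1 + α) = u ^ (-α) * (1 - α * x) := by rw [← hux]; ring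
      _ ≤ _ := mul_le_mul_of_nonneg_left (one_sub_mul_le_one_add_rpow_neg hx0 hα0 hα1) hupos.le
  · calc u ^ (-α) * (1 + x) ^ (-α) ≤ u ^ (-α) * (1 - α * (x / (1 + x))) :=
          mul_le_mul_of_nonneg_left (one_add_rpow_neg_le_one_sub_mul_div hx0 hα0 hα1) hupos.le
      _ ≤ u ^ (-α) * (1 - α * (x / 3)) := by gcongr
      _ = u ^ (-α) - α * 2 ^ (1 + α) / 3 := by rw [← hux]; ring

lemma add_mul_le_and_le_add_mul_of_increments {b : ℕ → ℝ} {δ Δ : ℝ}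
    (h : ∀ k, b k + δ ≤ b (k + 1) ∧ b (k + 1) ≤ b k + Δ) (k : ℕ) :
    b 0 + δ * k ≤ b k ∧ b k ≤ b 0 + Δ * k := by
  induction k with
  | zero => simp
  | succ n ih =>
    obtain ⟨h₁, h₂⟩ := h n
    push_cast
    constructor <;> linarith [ih.1, ih.2]

lemma rpow_neg_inv_bounds_of_rpow_neg_bounds {α x t c₁ c₂ : ℝ} (hα : 0 < α) (hx : 0 < x)
    (ht : 0 < t) (hc₁ : 0 < c₁) (h₁ : c₁ * t ≤ x ^ (-α)) (h₂ : x ^ (-α) ≤ c₂ * t) :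
    c₂ ^ (-(1 / α)) * t ^ (-(1 / α)) ≤ x ∧ x ≤ c₁ ^ (-(1 / α)) * t ^ (-(1 / α)) := by
  have hinv : (x ^ (-α)) ^ (-(1 / α)) = x := by
    rw [← rpow_mul hx.le, neg_mul_neg, mul_one_div_cancel hα.ne', rpow_one]
  have hexp : -(1 / α) ≤ 0 := by simp [hα.le]
  have hc₂ : 0 < c₂ := pos_of_mul_pos_left ((mul_pos hc₁ ht).trans_le (h₁.trans h₂)) ht.le
  rw [← mul_rpow hc₂.le ht.le, ← mul_rpow hc₁.le ht.le]
  constructor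
  · calc (c₂ * t) ^ (-(1 / α)) ≤ (x ^ (-α)) ^ (-(1 / α)) :=
          rpow_le_rpow_of_nonpos (rpow_pos_of_pos hx _) h₂ hexp
      _ = x := hinv
  · calc x = (x ^ (-α)) ^ (-(1 / α)) := hinv.symm
      _ ≤ (c₁ * t) ^ (-(1 / α)) := rpow_le_rpow_of_nonpos (by positivity) h₁ hexp

/-- **Asymptotics of the parabolic backward orbit of the Pomeau–Manneville map.**
With `a′₀ = 1/2` and `T_α(a′_k) = a′_{k−1}`, `a′_k ∈ (0,1/2)`, one has
`a′_k ≍ k^{−1/α}`. -/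
theorem pomeau_manneville_preimage_asymptotics
    (α : ℝ) (hα0 : 0 < α) (hα1 : α < 1)
    (a : ℕ → ℝ) (ha0 : a 0 = 1 / 2)
    (hrec : ∀ k : ℕ, a (k + 1) ∈ Ioo (0 : ℝ) (1 / 2) ∧ pmMap α (a (k + 1)) = a k) :
    ∃ c₁ > 0, ∃ c₂ > 0, ∀ k : ℕ, 1 ≤ k →
      c₁ * (k : ℝ) ^ (-(1 / α)) ≤ a k ∧ a k ≤ c₂ * (k : ℝ) ^ (-(1 / α)) := by
  set C : ℝ := 2 ^ (1 + α)
  have hapos : ∀ k, 0 < a k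
    | 0 => by rw [ha0]; norm_num
    | k + 1 => (hrec k).1.1
  have hincr : ∀ k, a k ^ (-α) + α * C / 3 ≤ a (k + 1) ^ (-α) ∧
      a (k + 1) ^ (-α) ≤ a k ^ (-α) + α * C := fun k => by
    have h := pmMap_rpow_neg_bounds hα0.le hα1.le (hrec k).1
    rw [(hrec k).2] at h
    constructor <;> linarith [h.1, h.2]
  have hb0 : a 0 ^ (-α) = 2 ^ α := by
    rw [ha0, one_div, inv_rpow zero_le_two, rpow_neg zero_le_two, inv_inv]
  refine ⟨(2 ^ α + α * C) ^ (-(1 / α)), by positivity, (α * C / 3) ^ (-(1 / α)), by positivity,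
    fun k hk => ?_⟩
  have hk1 : (1 : ℝ) ≤ k := by exact_mod_cast hk
  obtain ⟨hlo, hhi⟩ := add_mul_le_and_le_add_mul_of_increments hincr k
  rw [hb0] at hlo hhi
  have h2α : 0 < (2 : ℝ) ^ α := by positivity
  exact rpow_neg_inv_bounds_of_rpow_neg_bounds hα0 (hapos k) (by positivity) (by positivity)
    (by linarith) (by nlinarith)
end
end

section
/- Let 0 < α₀ < α₁ < 1 and let (α_j)_{j ≥ 1} be any sequence with α_j ∈ {α₀, α₁}. Define a₀ = 1/2 and, for j ≥ 1, let a_j ∈ (0,1/2) be the left-branch preimage of a_{j−1} under the Pomeau–Manneville map T_{α_j}, i.e. T_{α_j}(a_j) = a_{j−1} with T_α(x) = x + 2^{1+α}x^{1+α} on [0,1/2). Then there is a constant C (depending only on α₀, α₁) such that for every n: ∏_{j=1}^n T′_{α_j}(a_j) ≤ C · a_n^{−(1+α₁)}, where T′_α(x) = 1 + (1+α)2^{1+α}x^α. -/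
open Set

noncomputable section

/-- **Derivative bound along a random parabolic backward orbit.** For any sequence of
parameters `α_j ∈ {α₀, α₁}` and the backward orbit `a₀ = 1/2`,
`T_{α_j}(a_j) = a_{j−1}`, `a_j ∈ (0,1/2)`, one has
`∏_{j=1}^n T′_{α_j}(a_j) ≤ C·a_n^{−(1+α₁)}` with
`T′_α(x) = 1 + (1+α)2^{1+α}x^α`. -/
theorem pomeau_manneville_derivative_product_bound
    (α₀ α₁ : ℝ) (h0 : 0 < α₀) (h01 : α₀ < α₁) (h1 : α₁ < 1)
    (αs : ℕ → ℝ) (hαs : ∀ j, αs j = α₀ ∨ αs j = α₁)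
    (a : ℕ → ℝ) (ha0 : a 0 = 1 / 2)
    (hrec : ∀ j : ℕ, a (j + 1) ∈ Ioo (0 : ℝ) (1 / 2) ∧
      pmMap (αs (j + 1)) (a (j + 1)) = a j) :
    ∃ C > 0, ∀ n : ℕ,
      (∏ j ∈ Finset.Icc 1 n, (1 + (1 + αs j) * 2 ^ (1 + αs j) * a j ^ αs j))
        ≤ C * a n ^ (-(1 + α₁)) := by
  have hpos : ∀ n, 0 < a n := by
    intro n
    cases n with
    | zero => rw [ha0]; norm_num
    | succ k => exact (hrec k).1.1
  -- key step: each factor is bounded by (a j / a (j+1))^(1+α₁)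
  have key : ∀ j : ℕ,
      1 + (1 + αs (j+1)) * 2 ^ (1 + αs (j+1)) * a (j+1) ^ αs (j+1)
        ≤ (a j / a (j+1)) ^ (1 + α₁) := by
    intro j
    obtain ⟨⟨hpos', hlt⟩, heq⟩ := hrec j
    have hα : 0 < αs (j+1) ∧ αs (j+1) ≤ α₁ := by
      rcases hαs (j+1) with h | h <;> rw [h] <;> constructor <;> linarith
    set α := αs (j+1)
    have heq' : a (j+1) + 2 ^ (1 + α) * a (j+1) ^ (1 + α) = a j := by
      rwa [pmMap, if_pos hlt] at heq
    set t : ℝ := 2 ^ (1 + α) * a (j+1) ^ α with ht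
    have htpos : 0 < t := by
      apply mul_pos (Real.rpow_pos_of_pos (by norm_num) _)
        (Real.rpow_pos_of_pos hpos' _)
    have hratio : a j / a (j+1) = 1 + t := by
      rw [div_eq_iff (ne_of_gt hpos'), ← heq', Real.rpow_add hpos', Real.rpow_one, ht]
      ring
    have hbern : 1 + (1 + α) * t ≤ (1 + t) ^ (1 + α) :=
      one_add_mul_self_le_rpow_one_add (by linarith) (by linarith [hα.1])
    have hmono : (1 + t) ^ (1 + α) ≤ (1 + t) ^ (1 + α₁) :=
      Real.rpow_le_rpow_of_exponent_le (by linarith) (by linarith [hα.2])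
    rw [hratio]
    calc 1 + (1 + α) * 2 ^ (1 + α) * a (j+1) ^ α
        = 1 + (1 + α) * t := by rw [ht]; ring
      _ ≤ (1 + t) ^ (1 + α) := hbern
      _ ≤ (1 + t) ^ (1 + α₁) := hmono
  -- induction: product ≤ (a 0 / a n)^(1+α₁)
  have main : ∀ n : ℕ,
      (∏ j ∈ Finset.Icc 1 n, (1 + (1 + αs j) * 2 ^ (1 + αs j) * a j ^ αs j))
        ≤ (a 0 / a n) ^ (1 + α₁) := by
    intro n
    induction n with
    | zero =>
      simp only [Finset.Icc_self, Finset.Icc_eq_empty_of_lt (by omega : (1:ℕ) > 0)]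
      rw [div_self (ne_of_gt (hpos 0)), Real.one_rpow, Finset.prod_empty]
    | succ k ih =>
      rw [Finset.prod_Icc_succ_top (by omega : 1 ≤ k + 1)]
      have hfac_pos : ∀ j : ℕ, (0:ℝ) <
          1 + (1 + αs j) * 2 ^ (1 + αs j) * a j ^ αs j := by
        intro j
        have h1' : (0:ℝ) < 1 + αs j := by
          rcases hαs j with h | h <;> rw [h] <;> linarith
        have h2 : (0:ℝ) < (2:ℝ) ^ (1 + αs j) :=
          Real.rpow_pos_of_pos (by norm_num) (1 + αs j)
        have h3 : (0:ℝ) < a j ^ αs j := Real.rpow_pos_of_pos (hpos j) (αs j)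
        nlinarith [mul_pos (mul_pos h1' h2) h3]
      have hprodpos : (0:ℝ) ≤ ∏ j ∈ Finset.Icc 1 k,
          (1 + (1 + αs j) * 2 ^ (1 + αs j) * a j ^ αs j) :=
        le_of_lt (Finset.prod_pos fun j _ => hfac_pos j)
      calc (∏ j ∈ Finset.Icc 1 k, (1 + (1 + αs j) * 2 ^ (1 + αs j) * a j ^ αs j))
            * (1 + (1 + αs (k+1)) * 2 ^ (1 + αs (k+1)) * a (k+1) ^ αs (k+1))
          ≤ (a 0 / a k) ^ (1 + α₁) * (a k / a (k+1)) ^ (1 + α₁) := by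
            apply mul_le_mul ih (key k) (le_of_lt (hfac_pos (k+1)))
              (Real.rpow_nonneg (le_of_lt (div_pos (hpos 0) (hpos k))) _)
        _ = (a 0 / a (k+1)) ^ (1 + α₁) := by
            rw [← Real.mul_rpow (le_of_lt (div_pos (hpos 0) (hpos k)))
              (le_of_lt (div_pos (hpos k) (hpos (k+1))))]
            congr 1
            rw [div_mul_div_comm, mul_comm (a 0) (a k),
              mul_div_mul_left _ _ (ne_of_gt (hpos k))]
        _ = (a 0 / a (k+1)) ^ (1 + α₁) := rfl
  refine ⟨(1/2 : ℝ) ^ (1 + α₁), Real.rpow_pos_of_pos (by norm_num) _, fun n => ?_⟩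
  calc (∏ j ∈ Finset.Icc 1 n, (1 + (1 + αs j) * 2 ^ (1 + αs j) * a j ^ αs j))
      ≤ (a 0 / a n) ^ (1 + α₁) := main n
    _ = (1/2 : ℝ) ^ (1 + α₁) * a n ^ (-(1 + α₁)) := by
        rw [Real.div_rpow (by rw [ha0]; norm_num) (le_of_lt (hpos n)),
          Real.rpow_neg (le_of_lt (hpos n)), ha0, div_eq_mul_inv]
end
end

section
/- Let (M,d) be a metric space with a Borel probability measure m and let T^j : M → M (j ≥ 1) be measurable maps (e.g. the iterates T_ω^j of a random composition). Suppose there are constants b > 0, v′ > 0, C > 0 such that, for the sequence ρ_n = e^{−n^{2/b}}, m({y ∈ M : d(T^j y, y) < 2ρ_n for some 1 ≤ j < ρ_n^{−v′}}) ≤ C |log ρ_n|^{−b} for all large n. Define τ_{2ρ}(y) = inf{j ≥ 1 : d(T^j y, y) < 2ρ}. Then for m-almost every y: liminf_{ρ → 0} log τ_{2ρ}(y)/(−log ρ) ≥ v′. -/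
/-!
By Borel–Cantelli, the summable bound `C n⁻²` shows that a.e. `y` lies in only finitely many
of the sets `{y : d(T^j y, y) < 2ρₙ for some 1 ≤ j < ρₙ^{-v'}}`. Any small `ρ` lies between
consecutive radii, `ρₙ₊₁ ≤ ρ < ρₙ`, and since `(n + 1)^{2/b} / n^{2/b} → 1`, for `v < v'` one has
`ρ^{-v} ≤ ρₙ₊₁^{-v} < ρₙ^{-v'}` once `n` is large; so every `j ≤ ρ^{-v}` is a time excluded for
`y` at radius `ρₙ > ρ`.
-/

open MeasureTheory Filter Topology

theorem ae_eventually_notMem_of_eventually_le_ofReal {α : Type*} [MeasurableSpace α]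
    {μ : Measure α} {s : ℕ → Set α} {f : ℕ → ℝ} (hf : Summable f)
    (hs : ∀ᶠ n in atTop, μ (s n) ≤ ENNReal.ofReal (f n)) :
    ∀ᵐ x ∂μ, ∀ᶠ n in atTop, x ∉ s n := by
  obtain ⟨n₀, hn₀⟩ := eventually_atTop.mp hs
  have htail : ∑' k, μ (s (k + n₀)) ≠ ⊤ :=
    ne_top_of_le_ne_top
      (ENNReal.tsum_coe_ne_top_iff_summable.mpr ((summable_nat_add_iff n₀).mpr hf).toNNReal)
      (ENNReal.tsum_le_tsum fun k => hn₀ _ (Nat.le_add_left _ _))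
  filter_upwards [ae_eventually_notMem htail] with x hx
  rwa [← map_add_atTop_eq_nat n₀]

theorem eventually_mul_rpow_succ_lt {v v' : ℝ} (hv : 0 < v) (hvv' : v < v') (p : ℝ) :
    ∀ᶠ n : ℕ in atTop, v * ((n + 1 : ℕ) : ℝ) ^ p < v' * (n : ℝ) ^ p := by
  have hratio : Tendsto (fun n : ℕ => ((n : ℝ) / (n + 1)) ^ p) atTop (𝓝 1) := by
    simpa using (tendsto_natCast_div_add_atTop (1 : ℝ)).rpow_const (p := p) (Or.inl one_ne_zero)
  filter_upwards [hratio.eventually_const_lt ((div_lt_one (hv.trans hvv')).mpr hvv'),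
    eventually_gt_atTop 0] with n hn hpos
  have hn' : (0 : ℝ) < n := Nat.cast_pos.mpr hpos
  rw [Real.div_rpow hn'.le (by positivity), div_lt_div_iff₀ (hv.trans hvv') (by positivity)] at hn
  push_cast
  linarith

theorem eventually_nhdsGT_exists_bracket {r : ℕ → ℝ} (hr : Tendsto r atTop (𝓝 0))
    (hpos : ∀ᶠ n in atTop, 0 < r n) {P : ℕ → Prop} (hP : ∀ᶠ n in atTop, P n) :
    ∀ᶠ ρ in 𝓝[>] 0, ∃ n, P n ∧ r (n + 1) ≤ ρ ∧ ρ < r n := by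
  obtain ⟨N, hN⟩ := eventually_atTop.mp (hP.and hpos)
  filter_upwards [Ioo_mem_nhdsGT (hN N le_rfl).2] with ρ ⟨hρ, hρN⟩
  have hex : ∃ k, r (k + (N + 1)) ≤ ρ :=
    ((tendsto_add_atTop_nat (N + 1)).eventually (hr.eventually (ge_mem_nhds hρ))).exists
  refine ⟨Nat.find hex + N, (hN _ (Nat.le_add_left _ _)).1,
    by simpa [add_assoc] using Nat.find_spec hex, ?_⟩
  rcases hk : Nat.find hex with _ | k
  · simpa using hρN
  · have hmin := Nat.find_min hex (show k < Nat.find hex by omega)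
    rwa [not_le, show k + (N + 1) = k + 1 + N by omega] at hmin

noncomputable def expRadius (b : ℝ) (n : ℕ) : ℝ := Real.exp (-(n : ℝ) ^ (2 / b))

theorem expRadius_pos (b : ℝ) (n : ℕ) : 0 < expRadius b n := Real.exp_pos _

theorem tendsto_expRadius {b : ℝ} (hb : 0 < b) : Tendsto (expRadius b) atTop (𝓝 0) :=
  Real.tendsto_exp_atBot.comp <| tendsto_neg_atTop_atBot.comp <|
    (tendsto_rpow_atTop (by positivity)).comp tendsto_natCast_atTop_atTop

theorem abs_log_expRadius_rpow_neg {b : ℝ} (hb : b ≠ 0) (n : ℕ) :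
    |Real.log (expRadius b n)| ^ (-b) = (n : ℝ) ^ (-2 : ℝ) := by
  rw [expRadius, Real.log_exp, abs_neg, abs_of_nonneg (by positivity),
    ← Real.rpow_mul (Nat.cast_nonneg n)]
  field_simp

theorem expRadius_rpow_neg (b v : ℝ) (n : ℕ) :
    expRadius b n ^ (-v) = Real.exp (v * (n : ℝ) ^ (2 / b)) := by
  rw [expRadius, ← Real.exp_mul]
  ring_nf

theorem eventually_expRadius_succ_rpow_neg_lt (b : ℝ) {v v' : ℝ} (hv : 0 < v) (hvv' : v < v') :
    ∀ᶠ n in atTop, expRadius b (n + 1) ^ (-v) < expRadius b n ^ (-v') := by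
  filter_upwards [eventually_mul_rpow_succ_lt hv hvv' (2 / b)] with n hn
  simpa only [expRadius_rpow_neg, Real.exp_lt_exp] using hn

theorem recurrence_rate_liminf_lower_bound_general
    {M : Type*} [MetricSpace M] [MeasurableSpace M]
    (m : Measure M)
    (Tj : ℕ → M → M)
    (b v' C : ℝ) (hb : 0 < b)
    (hyp : ∃ n₀ : ℕ, ∀ n : ℕ, n₀ ≤ n →
      m {y : M | ∃ j : ℕ, 1 ≤ j ∧
          (j : ℝ) < Real.exp (-(n : ℝ) ^ (2 / b)) ^ (-v') ∧
          dist (Tj j y) y < 2 * Real.exp (-(n : ℝ) ^ (2 / b))}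
        ≤ ENNReal.ofReal (C * |Real.log (Real.exp (-(n : ℝ) ^ (2 / b)))| ^ (-b))) :
    ∀ᵐ y ∂m, ∀ v : ℝ, 0 < v → v < v' →
      ∀ᶠ ρ : ℝ in nhdsWithin 0 (Set.Ioi 0),
        ∀ j : ℕ, 1 ≤ j → (j : ℝ) ≤ ρ ^ (-v) → 2 * ρ ≤ dist (Tj j y) y := by
  have hfew : ∀ᵐ y ∂m, ∀ᶠ n in atTop, y ∉ {y : M | ∃ j : ℕ, 1 ≤ j ∧
      (j : ℝ) < expRadius b n ^ (-v') ∧ dist (Tj j y) y < 2 * expRadius b n} := by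
    obtain ⟨n₀, hn₀⟩ := hyp
    refine ae_eventually_notMem_of_eventually_le_ofReal
      ((Real.summable_nat_rpow.mpr (by norm_num : (-2 : ℝ) < -1)).mul_left C) ?_
    filter_upwards [eventually_ge_atTop n₀] with n hn
    rw [← abs_log_expRadius_rpow_neg hb.ne']
    exact hn₀ n hn
  filter_upwards [hfew] with y hy v hv hvv'
  filter_upwards [eventually_nhdsGT_exists_bracket (tendsto_expRadius hb)
    (.of_forall (expRadius_pos b)) (hy.and (eventually_expRadius_succ_rpow_neg_lt b hv hvv'))]
    with ρ ⟨n, ⟨hyn, htime⟩, hle, hlt⟩ j hj hjρ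
  by_contra! hd
  refine hyn ⟨j, hj, ?_, by linarith⟩
  calc (j : ℝ) ≤ ρ ^ (-v) := hjρ
    _ ≤ expRadius b (n + 1) ^ (-v) :=
      Real.rpow_le_rpow_of_nonpos (expRadius_pos b _) hle (neg_nonpos.mpr hv.le)
    _ < expRadius b n ^ (-v') := htime

/-- **Lower bound on the recurrence rate from summable short-return estimates.** If along
the sequence `ρ_n = e^{−n^{2/b}}` the measure of the set of points returning `2ρ_n`-close
to themselves before time `ρ_n^{−v′}` is at most `C|log ρ_n|^{−b}`, then for `m`-a.e. `y`
the first return time `τ_{2ρ}(y) = inf{j ≥ 1 : d(T^j y, y) < 2ρ}` satisfies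
`liminf_{ρ→0} log τ_{2ρ}(y)/(−log ρ) ≥ v′`, i.e. for every `0 < v < v′` one eventually
has `τ_{2ρ}(y) > ρ^{−v}` as `ρ → 0⁺`. -/
theorem recurrence_rate_liminf_lower_bound
    {M : Type*} [MetricSpace M] [MeasurableSpace M] [BorelSpace M]
    (m : Measure M) [IsProbabilityMeasure m]
    (Tj : ℕ → M → M)
    (b v' C : ℝ) (hb : 0 < b) (hv' : 0 < v') (hC : 0 < C)
    (hyp : ∃ n₀ : ℕ, ∀ n : ℕ, n₀ ≤ n →
      m {y : M | ∃ j : ℕ, 1 ≤ j ∧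
          (j : ℝ) < Real.exp (-(n : ℝ) ^ (2 / b)) ^ (-v') ∧
          dist (Tj j y) y < 2 * Real.exp (-(n : ℝ) ^ (2 / b))}
        ≤ ENNReal.ofReal (C * |Real.log (Real.exp (-(n : ℝ) ^ (2 / b)))| ^ (-b))) :
    ∀ᵐ y ∂m, ∀ v : ℝ, 0 < v → v < v' →
      ∀ᶠ ρ : ℝ in nhdsWithin 0 (Set.Ioi 0),
        ∀ j : ℕ, 1 ≤ j → (j : ℝ) ≤ ρ ^ (-v) → 2 * ρ ≤ dist (Tj j y) y :=
  recurrence_rate_liminf_lower_bound_general m Tj b v' C hb hyp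
end
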